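/- arXiv:1510.01967 — 6 statements merged into one kernel-verified Lean document; each statement's English description precedes it below -/
import Mathlib

section
/- If x is an irrational real number, then (1/N)·∑_{k=1}^{N} cos²(kπx) converges to 1/2 as N → ∞. -/
open Real Filter

theorem cesaro_cos_sq_irrational (x : ℝ) (hx : Irrational x) :
    Tendsto (fun N : ℕ =>
        (1 / (N : ℝ)) * ∑ k ∈ Finset.Icc 1 N, Real.cos ((k : ℝ) * Real.pi * x) ^ 2)
      atTop (nhds (1 / 2)) := by
  set z : ℂ := Complex.exp ((2 * Real.pi * x : ℝ) * Complex.I) with hzdef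
  have hz1 : z ≠ 1 := by
    intro h
    rw [hzdef, Complex.exp_eq_one_iff] at h
    obtain ⟨n, hn⟩ := h
    have him := congrArg Complex.im hn
    simp [Complex.mul_im] at him
    have hpi := Real.pi_pos
    have hx' : x = (n : ℝ) := by
      have h2 : 2 * Real.pi * x = (n : ℝ) * (2 * Real.pi) := by simpa using him
      exact mul_left_cancel₀ (a := 2 * Real.pi) (by positivity)
        (by linarith : 2 * Real.pi * x = 2 * Real.pi * (n : ℝ))
    exact hx ⟨(n : ℚ), by push_cast; rw [← hx']⟩
  have hnorm : ‖z - 1‖ ≠ 0 := by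
    simp [sub_eq_zero, hz1]
  set C : ℝ := 2 / ‖z - 1‖ with hC
  have hCpos : 0 ≤ C := by positivity
  have hzk : ∀ k : ℕ, z ^ k = Complex.exp ((2 * Real.pi * (k : ℝ) * x : ℝ) * Complex.I) := by
    intro k
    rw [hzdef, ← Complex.exp_nat_mul]
    congr 1
    push_cast
    ring
  have hbound : ∀ N : ℕ, |∑ k ∈ Finset.Icc 1 N, Real.cos (2 * Real.pi * (k : ℝ) * x)| ≤ C := by
    intro N
    have hsum : ∑ k ∈ Finset.Icc 1 N, Real.cos (2 * Real.pi * (k : ℝ) * x)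
        = (∑ k ∈ Finset.Icc 1 N, z ^ k).re := by
      rw [Complex.re_sum]
      refine Finset.sum_congr rfl fun k _ => ?_
      rw [hzk k, Complex.exp_ofReal_mul_I_re]
    rw [hsum]
    have h1 : |(∑ k ∈ Finset.Icc 1 N, z ^ k).re| ≤ ‖∑ k ∈ Finset.Icc 1 N, z ^ k‖ :=
      Complex.abs_re_le_norm _
    refine h1.trans ?_
    have hIcc : Finset.Icc 1 N = Finset.Ico 1 (N + 1) := by
      ext a; simp [Nat.lt_succ_iff]
    rw [hIcc, geom_sum_Ico hz1 (Nat.le_add_left 1 N), norm_div, hC]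
    gcongr
    have hzn : ‖z‖ = 1 := by rw [hzdef]; exact Complex.norm_exp_ofReal_mul_I _
    calc ‖z ^ (N + 1) - z ^ 1‖ ≤ ‖z ^ (N + 1)‖ + ‖z ^ 1‖ := norm_sub_le _ _
      _ = 1 + 1 := by simp [norm_pow, hzn]
      _ = 2 := by norm_num
  have hrw : ∀ N : ℕ, (∑ k ∈ Finset.Icc 1 N, Real.cos ((k : ℝ) * Real.pi * x) ^ 2)
      = (N : ℝ) / 2 + (1 / 2) * ∑ k ∈ Finset.Icc 1 N, Real.cos (2 * Real.pi * (k : ℝ) * x) := by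
    intro N
    have hterm : ∀ k ∈ Finset.Icc 1 N, Real.cos ((k : ℝ) * Real.pi * x) ^ 2
        = 1 / 2 + Real.cos (2 * Real.pi * (k : ℝ) * x) / 2 := by
      intro k _
      rw [Real.cos_sq]
      congr 2
      ring
    rw [Finset.sum_congr rfl hterm, Finset.sum_add_distrib, Finset.sum_const,
      Nat.card_Icc, Nat.add_sub_cancel, ← Finset.sum_div, nsmul_eq_mul]
    ring
  have hev : ∀ᶠ N : ℕ in atTop,
      (1 / (N : ℝ)) * ∑ k ∈ Finset.Icc 1 N, Real.cos ((k : ℝ) * Real.pi * x) ^ 2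
      = 1 / 2 + (1 / (2 * (N : ℝ))) * ∑ k ∈ Finset.Icc 1 N, Real.cos (2 * Real.pi * (k : ℝ) * x) := by
    filter_upwards [eventually_ge_atTop 1] with N hN
    have hN0 : (N : ℝ) ≠ 0 := Nat.cast_ne_zero.mpr (by omega)
    have h1 : (1 / (N : ℝ)) * ((N : ℝ) / 2) = 1 / 2 := by field_simp
    rw [hrw N, mul_add, h1]
    congr 1
    ring
  rw [Filter.tendsto_congr' hev]
  have htend : Tendsto (fun N : ℕ => (1 / (2 * (N : ℝ))) * C) atTop (nhds 0) := by
    have h2 : Tendsto (fun N : ℕ => (1 / (N : ℝ)) * (C / 2)) atTop (nhds (0 * (C / 2))) :=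
      tendsto_one_div_atTop_nhds_zero_nat.mul_const _
    rw [zero_mul] at h2
    refine h2.congr fun N => ?_
    ring
  have h0 : Tendsto (fun N : ℕ =>
      (1 / (2 * (N : ℝ))) * ∑ k ∈ Finset.Icc 1 N, Real.cos (2 * Real.pi * (k : ℝ) * x))
      atTop (nhds 0) := by
    refine squeeze_zero_norm (fun N => ?_) htend
    rcases Nat.eq_zero_or_pos N with h | h
    · subst h; simp
    · have hN0 : (0:ℝ) < (N : ℝ) := by exact_mod_cast h
      rw [norm_mul, Real.norm_eq_abs, Real.norm_eq_abs,
        abs_of_pos (by positivity : (0:ℝ) < 1 / (2 * (N:ℝ)))]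
      gcongr
      exact hbound N
  have := (tendsto_const_nhds (x := (1:ℝ)/2) (f := atTop (α := ℕ))).add h0
  simpa using this
end

section
/- If x is an irrational real number, then (1/N)·∑_{k=1}^{N} sin²(kπx) converges to 1/2 as N → ∞. -/
/-!
Writing `sin² (k a) = 1/2 - cos (2 k a) / 2`, it suffices that the cosine sums
`∑_{k=1}^N cos (2 k a)` stay bounded. Multiplied by `2 sin a` they telescope to
`sin ((2N+1) a) - sin a`, so they are bounded by `1 / |sin a|` as soon as `sin a ≠ 0`,
i.e. `a ∉ πℤ`; for `a = π x` this holds because `x` is not an integer.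
-/

open Real Filter Finset Topology

theorem two_mul_sin_mul_sum_cos_two_mul (a : ℝ) (N : ℕ) :
    2 * sin a * ∑ k ∈ Icc 1 N, cos (2 * k * a) = sin ((2 * N + 1) * a) - sin a := by
  induction N with
  | zero => simp
  | succ N ih =>
    have step := two_mul_sin_mul_cos a (2 * (N + 1) * a)
    rw [show a - 2 * (N + 1) * a = -((2 * N + 1) * a) by ring, sin_neg,
      show a + 2 * (N + 1) * a = (2 * (N + 1) + 1) * a by ring] at step
    rw [sum_Icc_succ_top (by omega), mul_add, ih]
    push_cast
    linarith

theorem abs_sum_cos_two_mul_le {a : ℝ} (ha : sin a ≠ 0) (N : ℕ) :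
    |∑ k ∈ Icc 1 N, cos (2 * k * a)| ≤ 1 / |sin a| := by
  have hpos : 0 < |sin a| := abs_pos.mpr ha
  have htel : |2 * sin a * ∑ k ∈ Icc 1 N, cos (2 * k * a)| ≤ 2 := by
    rw [two_mul_sin_mul_sum_cos_two_mul]
    calc |sin ((2 * N + 1) * a) - sin a| ≤ |sin ((2 * N + 1) * a)| + |sin a| := abs_sub _ _
      _ ≤ 2 := by linarith [abs_sin_le_one ((2 * N + 1) * a), abs_sin_le_one a]
  rw [abs_mul, abs_mul, abs_two] at htel
  rw [le_div_iff₀ hpos]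
  linarith

theorem sum_sin_sq_eq (a : ℝ) (N : ℕ) :
    ∑ k ∈ Icc 1 N, sin (k * a) ^ 2 = N / 2 - (∑ k ∈ Icc 1 N, cos (2 * k * a)) / 2 := by
  simp_rw [sin_sq_eq_half_sub, ← mul_assoc]
  rw [sum_sub_distrib, sum_const, Nat.card_Icc, ← sum_div, nsmul_eq_mul]
  push_cast
  ring

theorem tendsto_cesaro_sin_sq {a : ℝ} (ha : sin a ≠ 0) :
    Tendsto (fun N : ℕ => (1 / (N : ℝ)) * ∑ k ∈ Icc 1 N, sin (k * a) ^ 2)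
      atTop (𝓝 (1 / 2)) := by
  have hbdd : IsBoundedUnder (· ≤ ·) atTop
      ((fun y => ‖y‖) ∘ fun N : ℕ => (∑ k ∈ Icc 1 N, cos (2 * k * a)) / 2) :=
    isBoundedUnder_of ⟨1 / |sin a|, fun N => by
      simpa [abs_div] using (div_le_self (abs_nonneg _) one_le_two).trans
        (abs_sum_cos_two_mul_le ha N)⟩
  have hcos_mean := (tendsto_const_div_atTop_nhds_zero_nat (1 : ℝ)).zero_mul_isBoundedUnder_le hbdd
  refine ((tendsto_const_nhds (x := (1 / 2 : ℝ))).sub hcos_mean).congr' ?_ |>.trans (by simp)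
  filter_upwards [eventually_ne_atTop 0] with N hN
  rw [sum_sin_sq_eq, mul_sub]
  congr 1
  field_simp

theorem cesaro_sin_sq_irrational (x : ℝ) (hx : Irrational x) :
    Tendsto (fun N : ℕ =>
        (1 / (N : ℝ)) * ∑ k ∈ Finset.Icc 1 N, Real.sin ((k : ℝ) * Real.pi * x) ^ 2)
      atTop (nhds (1 / 2)) := by
  have hsin : sin (π * x) ≠ 0 := by
    rw [Ne, sin_eq_zero_iff]
    rintro ⟨n, hn⟩
    exact hx.ne_int n (mul_left_cancel₀ pi_ne_zero (by linarith)).symm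
  simpa only [mul_assoc] using tendsto_cesaro_sin_sq hsin
end

section
/- Let (f_k) be a real sequence whose Cesàro averages F_N = (1/N)·∑_{k=1}^{N} f_k tend to 0, and let (b_k) be a nonnegative real sequence with partial sums a_k = ∑_{n=1}^{k} b_n. Assume ∑_{k=1}^{N} a_k → ∞ and that (N·a_N)/(∑_{k=1}^{N} a_k) converges to some real number a. Then the weighted averages (∑_{k=1}^{N} a_k f_k)/(∑_{k=1}^{N} a_k) converge to 0 as N → ∞. -/
open Filter

/-- Weighted averaging lemma: if Cesàro averages of `f` tend to 0, and the weights
`a k = ∑_{n=1}^k b n` (with `b ≥ 0`) satisfy `∑_{k≤N} a k → ∞` and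
`N·a N / ∑_{k≤N} a k → a`, then the weighted averages of `f` tend to 0. -/
theorem weighted_average_zero (f b : ℕ → ℝ) (hb : ∀ k, 0 ≤ b k)
    (a : ℕ → ℝ) (ha : ∀ k, a k = ∑ n ∈ Finset.Icc 1 k, b n)
    (hF : Tendsto (fun N : ℕ => (1 / (N : ℝ)) * ∑ k ∈ Finset.Icc 1 N, f k) atTop (nhds 0))
    (hdiv : Tendsto (fun N : ℕ => ∑ k ∈ Finset.Icc 1 N, a k) atTop atTop)
    (aL : ℝ)
    (hnorm : Tendsto (fun N : ℕ => ((N : ℝ) * a N) / ∑ k ∈ Finset.Icc 1 N, a k)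
      atTop (nhds aL)) :
    Tendsto (fun N : ℕ =>
        (∑ k ∈ Finset.Icc 1 N, a k * f k) / ∑ k ∈ Finset.Icc 1 N, a k)
      atTop (nhds 0) := by
  set A : ℕ → ℝ := fun N => ∑ k ∈ Finset.Icc 1 N, a k with hA
  set S : ℕ → ℝ := fun N => ∑ k ∈ Finset.Icc 1 N, f k with hS
  set g : ℕ → ℝ := fun k => S k / k with hgdef
  have hg : Tendsto g atTop (nhds 0) := by
    apply hF.congr
    intro N
    rw [one_div, inv_mul_eq_div]
  have hanneg : ∀ k, 0 ≤ a k := fun k => by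
    rw [ha]; exact Finset.sum_nonneg fun n _ => hb n
  have hAnneg : ∀ N, 0 ≤ A N := fun N => Finset.sum_nonneg fun k _ => hanneg k
  have hstep : ∀ N, a (N + 1) = a N + b (N + 1) := by
    intro N; rw [ha, ha, Finset.sum_Icc_succ_top (by omega)]
  have hAstep : ∀ N, A (N + 1) = A N + a (N + 1) := fun N =>
    Finset.sum_Icc_succ_top (by omega) a
  have hSstep : ∀ N, S (N + 1) = S N + f (N + 1) := fun N =>
    Finset.sum_Icc_succ_top (by omega) f
  -- Abel summation
  have habel : ∀ N, (∑ k ∈ Finset.Icc 1 (N + 1), a k * f k)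
      = a (N + 1) * S (N + 1) - ∑ k ∈ Finset.Icc 1 N, b (k + 1) * S k := by
    intro N
    induction N with
    | zero =>
      simp only [Finset.Icc_self, Finset.sum_singleton, hS]
      simp
    | succ M ih =>
      rw [Finset.sum_Icc_succ_top (by omega : 1 ≤ M + 1 + 1), ih,
        Finset.sum_Icc_succ_top (by omega : 1 ≤ M + 1), hSstep (M + 1), hstep (M + 1)]
      ring
  -- weight identity
  have hweight : ∀ N : ℕ, (∑ k ∈ Finset.Icc 1 N, (k : ℝ) * b (k + 1))
      = ((N : ℝ) + 1) * a (N + 1) - A (N + 1) := by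
    intro N
    induction N with
    | zero =>
      simp [hAstep 0, hA]
    | succ M ih =>
      rw [Finset.sum_Icc_succ_top (by omega : 1 ≤ M + 1), ih, hAstep (M + 1), hstep (M + 1)]
      push_cast
      ring
  -- the sum of |S k|-weighted terms
  set u : ℕ → ℝ := fun M => (∑ k ∈ Finset.Icc 1 M, (k : ℝ) * b (k + 1) * |g k|) / A (M + 1)
    with hu
  have hunneg : ∀ M, 0 ≤ u M := by
    intro M
    apply div_nonneg _ (hAnneg _)
    exact Finset.sum_nonneg fun k _ =>
      mul_nonneg (mul_nonneg (Nat.cast_nonneg k) (hb (k + 1))) (abs_nonneg _)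
  -- the Toeplitz estimate
  have hAshift : Tendsto (fun M : ℕ => A (M + 1)) atTop atTop :=
    hdiv.comp (tendsto_add_atTop_nat 1)
  have hnormshift : Tendsto (fun M : ℕ => ((M + 1 : ℕ) : ℝ) * a (M + 1) / A (M + 1))
      atTop (nhds aL) := hnorm.comp (tendsto_add_atTop_nat 1)
  have key : ∀ ε > (0 : ℝ), ∀ᶠ M in atTop, u M ≤ ε := by
    intro ε hε
    set C : ℝ := |aL| + 2 with hC
    have hCpos : (0 : ℝ) < C := by positivity
    set ε' : ℝ := ε / (2 * C) with hε'def
    have hε' : 0 < ε' := by positivity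
    have hgev : ∀ᶠ k in atTop, |g k| ≤ ε' := by
      filter_upwards [NormedAddCommGroup.tendsto_nhds_zero.1 hg ε' hε'] with k hk
      exact le_of_lt (by simpa using hk)
    obtain ⟨K, hK⟩ := eventually_atTop.1 hgev
    set Hd : ℝ := ∑ k ∈ Finset.Icc 1 K, (k : ℝ) * b (k + 1) * |g k| with hHd
    have hHdnneg : 0 ≤ Hd := Finset.sum_nonneg fun k _ =>
      mul_nonneg (mul_nonneg (Nat.cast_nonneg k) (hb (k + 1))) (abs_nonneg _)
    have hE1 : ∀ᶠ M in atTop, max 1 (Hd * 2 / ε) ≤ A (M + 1) :=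
      hAshift.eventually_ge_atTop _
    have hE2 : ∀ᶠ M in atTop, ((M + 1 : ℕ) : ℝ) * a (M + 1) / A (M + 1) < C :=
      hnormshift.eventually_lt_const (by rw [hC]; nlinarith [le_abs_self aL])
    filter_upwards [hE1, hE2, eventually_ge_atTop K] with M h1 h2 h3
    have hApos : 0 < A (M + 1) := lt_of_lt_of_le (by norm_num) ((le_max_left _ _).trans h1)
    -- split the sum
    have hsplit : (∑ k ∈ Finset.Icc 1 M, (k : ℝ) * b (k + 1) * |g k|)
        = Hd + ∑ k ∈ Finset.Ioc K M, (k : ℝ) * b (k + 1) * |g k| := by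
      rw [hHd, show Finset.Icc 1 M = Finset.Ioc 0 M from (Finset.Icc_add_one_left_eq_Ioc 0 M),
        show Finset.Icc 1 K = Finset.Ioc 0 K from (Finset.Icc_add_one_left_eq_Ioc 0 K)]
      exact (Finset.sum_Ioc_consecutive _ (Nat.zero_le K) h3).symm
    have htail : (∑ k ∈ Finset.Ioc K M, (k : ℝ) * b (k + 1) * |g k|)
        ≤ ε' * (C * A (M + 1)) := by
      calc (∑ k ∈ Finset.Ioc K M, (k : ℝ) * b (k + 1) * |g k|)
          ≤ ∑ k ∈ Finset.Ioc K M, (k : ℝ) * b (k + 1) * ε' := by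
            apply Finset.sum_le_sum
            intro k hk
            have hk' : K ≤ k := le_of_lt (Finset.mem_Ioc.1 hk).1
            have : 0 ≤ (k : ℝ) * b (k + 1) := mul_nonneg (Nat.cast_nonneg k) (hb (k + 1))
            exact mul_le_mul_of_nonneg_left (hK k hk') this
        _ = (∑ k ∈ Finset.Ioc K M, (k : ℝ) * b (k + 1)) * ε' := by
            rw [Finset.sum_mul]
        _ ≤ (∑ k ∈ Finset.Icc 1 M, (k : ℝ) * b (k + 1)) * ε' := by
            apply mul_le_mul_of_nonneg_right _ (le_of_lt hε')
            rw [show Finset.Icc 1 M = Finset.Ioc 0 M from (Finset.Icc_add_one_left_eq_Ioc 0 M)]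
            apply Finset.sum_le_sum_of_subset_of_nonneg
            · exact Finset.Ioc_subset_Ioc (Nat.zero_le K) le_rfl
            · intro k _ _; exact mul_nonneg (Nat.cast_nonneg k) (hb (k + 1))
        _ ≤ (((M + 1 : ℕ) : ℝ) * a (M + 1)) * ε' := by
            apply mul_le_mul_of_nonneg_right _ (le_of_lt hε')
            rw [hweight M]
            push_cast
            linarith [hAnneg (M + 1)]
        _ ≤ (C * A (M + 1)) * ε' := by
            apply mul_le_mul_of_nonneg_right _ (le_of_lt hε')
            rw [div_lt_iff₀ hApos] at h2
            exact le_of_lt h2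
        _ = ε' * (C * A (M + 1)) := by ring
    have hHdbound : Hd ≤ ε / 2 * A (M + 1) := by
      have h1' : Hd * 2 / ε ≤ A (M + 1) := (le_max_right _ _).trans h1
      rw [div_le_iff₀ hε] at h1'
      nlinarith
    rw [hu, div_le_iff₀ hApos, hsplit]
    have : ε' * (C * A (M + 1)) = ε / 2 * A (M + 1) := by
      rw [hε'def]; field_simp
    nlinarith
  have htoeplitz : Tendsto u atTop (nhds 0) := by
    rw [NormedAddCommGroup.tendsto_nhds_zero]
    intro ε hε
    filter_upwards [key (ε / 2) (by positivity)] with M hM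
    rw [Real.norm_eq_abs, abs_of_nonneg (hunneg M)]
    linarith
  -- second term tends to 0
  have hterm2' : Tendsto (fun M : ℕ =>
      (∑ k ∈ Finset.Icc 1 M, b (k + 1) * S k) / A (M + 1)) atTop (nhds 0) := by
    apply squeeze_zero_norm' _ htoeplitz
    filter_upwards with M
    rw [Real.norm_eq_abs]
    rcases (hAnneg (M + 1)).eq_or_lt with h | h
    · rw [← h]; simp [hunneg M]
    · simp only [hu]
      rw [abs_div, abs_of_pos h]
      gcongr
      calc |∑ k ∈ Finset.Icc 1 M, b (k + 1) * S k|
          ≤ ∑ k ∈ Finset.Icc 1 M, |b (k + 1) * S k| := Finset.abs_sum_le_sum_abs _ _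
        _ = ∑ k ∈ Finset.Icc 1 M, (k : ℝ) * b (k + 1) * |g k| := by
            apply Finset.sum_congr rfl
            intro k hk
            have hk1 : 1 ≤ k := (Finset.mem_Icc.1 hk).1
            have hk0 : (k : ℝ) ≠ 0 := by positivity
            rw [abs_mul, abs_of_nonneg (hb (k + 1)), hgdef]
            simp only
            rw [abs_div, Nat.abs_cast]
            field_simp
  have hterm2 : Tendsto (fun N : ℕ =>
      (∑ k ∈ Finset.Icc 1 (N - 1), b (k + 1) * S k) / A N) atTop (nhds 0) := by
    rw [← tendsto_add_atTop_iff_nat 1]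
    simpa using hterm2'
  have hterm1 : Tendsto (fun N : ℕ => ((N : ℝ) * a N / A N) * g N) atTop (nhds 0) := by
    have := hnorm.mul hg
    rw [mul_zero] at this
    exact this
  have hsub := hterm1.sub hterm2
  rw [sub_zero] at hsub
  apply hsub.congr'
  filter_upwards [eventually_ge_atTop 1] with N hN
  obtain ⟨M, rfl⟩ : ∃ M, N = M + 1 := ⟨N - 1, by omega⟩
  simp only [Nat.add_sub_cancel]
  rw [habel M, sub_div]
  congr 1
  rw [hgdef]
  simp only
  have hM0 : ((M + 1 : ℕ) : ℝ) ≠ 0 := Nat.cast_ne_zero.2 (by omega)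
  calc ((M + 1 : ℕ) : ℝ) * a (M + 1) / A (M + 1) * (S (M + 1) / ((M + 1 : ℕ) : ℝ))
      = a (M + 1) * S (M + 1) / A (M + 1) * (((M + 1 : ℕ) : ℝ) / ((M + 1 : ℕ) : ℝ)) := by
        ring
    _ = a (M + 1) * S (M + 1) / A (M + 1) := by rw [div_self hM0, mul_one]
end

section
/- Let (g_k) be a real sequence with (1/N)·∑_{k=1}^{N} g_k → C, and let (b_k) be a nonnegative sequence with partial sums a_k = ∑_{n=1}^{k} b_n satisfying ∑_{k=1}^{N} a_k → ∞ and (N·a_N)/(∑_{k=1}^{N} a_k) → a for some real a. Then (∑_{k=1}^{N} a_k g_k)/(∑_{k=1}^{N} a_k) → C as N → ∞. -/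
open Filter

private lemma abel_aux (f b a : ℕ → ℝ) (ha : ∀ k, a k = ∑ n ∈ Finset.Icc 1 k, b n) :
    ∀ N, ∑ k ∈ Finset.Icc 1 N, a k * f k
      = a N * (∑ k ∈ Finset.Icc 1 N, f k)
        - ∑ n ∈ Finset.Icc 1 N, b n * (∑ k ∈ Finset.Icc 1 (n-1), f k) := by
  have hstep : ∀ N, a (N+1) = a N + b (N+1) := fun N => by
    rw [ha, ha, Finset.sum_Icc_succ_top (by omega)]
  intro N
  induction N with
  | zero => simp [ha 0]
  | succ N ih =>
    rw [Finset.sum_Icc_succ_top (by omega : (1:ℕ) ≤ N+1),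
      Finset.sum_Icc_succ_top (by omega : (1:ℕ) ≤ N+1),
      Finset.sum_Icc_succ_top (by omega : (1:ℕ) ≤ N+1), ih, hstep]
    simp only [Nat.add_sub_cancel]
    ring

private lemma sum_b_aux (b a : ℕ → ℝ) (ha : ∀ k, a k = ∑ n ∈ Finset.Icc 1 k, b n) :
    ∀ N : ℕ, ∑ n ∈ Finset.Icc 1 N, b n * ((n:ℝ) - 1)
      = (N:ℝ) * a N - ∑ k ∈ Finset.Icc 1 N, a k := by
  have hstep : ∀ N, a (N+1) = a N + b (N+1) := fun N => by
    rw [ha, ha, Finset.sum_Icc_succ_top (by omega)]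
  intro N
  induction N with
  | zero => simp [ha 0]
  | succ N ih =>
    rw [Finset.sum_Icc_succ_top (by omega : (1:ℕ) ≤ N+1),
      Finset.sum_Icc_succ_top (by omega : (1:ℕ) ≤ N+1), ih, hstep]
    push_cast
    ring

/-- Weighted averaging corollary: if Cesàro averages of `g` tend to `C`, then so do the
weighted averages with weights `a k = ∑_{n=1}^k b n`, `b ≥ 0`, under the same
normalization conditions. -/
theorem weighted_average_const (g b : ℕ → ℝ) (hb : ∀ k, 0 ≤ b k)
    (a : ℕ → ℝ) (ha : ∀ k, a k = ∑ n ∈ Finset.Icc 1 k, b n)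
    (C : ℝ)
    (hG : Tendsto (fun N : ℕ => (1 / (N : ℝ)) * ∑ k ∈ Finset.Icc 1 N, g k) atTop (nhds C))
    (hdiv : Tendsto (fun N : ℕ => ∑ k ∈ Finset.Icc 1 N, a k) atTop atTop)
    (aL : ℝ)
    (hnorm : Tendsto (fun N : ℕ => ((N : ℝ) * a N) / ∑ k ∈ Finset.Icc 1 N, a k)
      atTop (nhds aL)) :
    Tendsto (fun N : ℕ =>
        (∑ k ∈ Finset.Icc 1 N, a k * g k) / ∑ k ∈ Finset.Icc 1 N, a k)
      atTop (nhds C) := by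
  classical
  set f : ℕ → ℝ := fun k => g k - C with hfdef
  set F : ℕ → ℝ := fun N => ∑ k ∈ Finset.Icc 1 N, f k with hFdef
  set S : ℕ → ℝ := fun N => ∑ k ∈ Finset.Icc 1 N, a k with hSdef
  have ha0 : ∀ k, 0 ≤ a k := fun k => by
    rw [ha]; exact Finset.sum_nonneg fun n _ => hb n
  have hSpos : ∀ᶠ N : ℕ in atTop, 0 < S N := hdiv.eventually_gt_atTop 0
  -- Cesàro average of f tends to 0
  have hF0 : Tendsto (fun N : ℕ => F N / N) atTop (nhds 0) := by
    have h1 := hG.sub (tendsto_const_nhds (x := C))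
    rw [sub_self] at h1
    refine h1.congr' ?_
    filter_upwards [eventually_ge_atTop 1] with N hN
    have hN0 : (N:ℝ) ≠ 0 := by
      have : (1:ℝ) ≤ N := by exact_mod_cast hN
      linarith
    have hFN : F N = (∑ k ∈ Finset.Icc 1 N, g k) - N * C := by
      simp [hFdef, hfdef, Finset.sum_sub_distrib, Nat.card_Icc]
    rw [hFN]
    field_simp
  -- key: weighted sums of f over S tend to 0
  have hT : Tendsto (fun N : ℕ => (∑ k ∈ Finset.Icc 1 N, a k * f k) / S N) atTop (nhds 0) := by
    rw [NormedAddCommGroup.tendsto_nhds_zero]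
    intro ε hε
    set M : ℝ := |aL| + 1 with hMdef
    have hM0 : 0 < M := by positivity
    set ε' : ℝ := ε / (2*M + 2) with hε'def
    have hε' : 0 < ε' := by positivity
    have hfinal : ε' * (2*M + 1) < ε := by
      have h1 : ε' * (2*M + 2) = ε := by
        rw [hε'def]; field_simp
      nlinarith
    -- choose K with |F k| ≤ ε' k for k ≥ K
    obtain ⟨K, hK⟩ := (((NormedAddCommGroup.tendsto_nhds_zero.mp hF0) ε' hε').and
      (eventually_ge_atTop 1)).exists_forall_of_atTop
    have hKbound : ∀ k, K ≤ k → |F k| ≤ ε' * k := by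
      intro k hk
      obtain ⟨h1, h2⟩ := hK k hk
      have hk0 : (0:ℝ) < k := by exact_mod_cast h2
      have h1' : |F k| / k ≤ ε' := le_of_lt (by simpa using h1)
      calc |F k| = |F k| / k * k := by rw [div_mul_cancel₀ _ hk0.ne']
        _ ≤ ε' * k := mul_le_mul_of_nonneg_right h1' hk0.le
    set D : ℝ := ∑ n ∈ Finset.Icc 1 K, b n * |F (n-1)| with hDdef
    have hMev : ∀ᶠ N : ℕ in atTop, ((N:ℝ) * a N) / S N ≤ M := by
      filter_upwards [hnorm.eventually (eventually_le_nhds (show aL < M by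
        simp only [hMdef]; nlinarith [abs_nonneg aL, le_abs_self aL]))] with N h
      exact h
    have hDev : ∀ᶠ N : ℕ in atTop, D / S N ≤ ε' := by
      have : Tendsto (fun N : ℕ => D / S N) atTop (nhds 0) :=
        tendsto_const_nhds.div_atTop hdiv
      filter_upwards [this.eventually (eventually_le_nhds hε')] with N h using h
    have hFNev : ∀ᶠ N : ℕ in atTop, |F N| / N ≤ ε' :=
      (NormedAddCommGroup.tendsto_nhds_zero.mp hF0) ε' hε' |>.mono fun N h => le_of_lt (by simpa using h)
    filter_upwards [hSpos, hMev, hDev, hFNev, eventually_ge_atTop (K+1)]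
      with N hS hM hD hFN hNK
    have hN1 : 1 ≤ N := by omega
    have hNpos : (0:ℝ) < N := by exact_mod_cast Nat.lt_of_lt_of_le Nat.zero_lt_one hN1
    -- the b-weighted sum bound
    have hbF : ∑ n ∈ Finset.Icc 1 N, b n * |F (n-1)|
        ≤ D + ε' * ((N:ℝ) * a N - S N) := by
      have hsplit : ∑ n ∈ Finset.Icc 1 N, b n * |F (n-1)|
          = D + ∑ n ∈ Finset.Ioc K N, b n * |F (n-1)| := by
        rw [hDdef, show Finset.Icc 1 N = Finset.Ioc 0 N from Finset.Icc_add_one_left_eq_Ioc 0 N,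
          show Finset.Icc 1 K = Finset.Ioc 0 K from Finset.Icc_add_one_left_eq_Ioc 0 K,
          Finset.sum_Ioc_consecutive _ (Nat.zero_le K) (by omega : K ≤ N)]
      rw [hsplit]
      gcongr
      calc ∑ n ∈ Finset.Ioc K N, b n * |F (n-1)|
          ≤ ∑ n ∈ Finset.Ioc K N, ε' * (b n * ((n:ℝ) - 1)) := by
            refine Finset.sum_le_sum fun n hn => ?_
            obtain ⟨hn1, hn2⟩ := Finset.mem_Ioc.mp hn
            have h1 : K ≤ n - 1 := by omega
            have h2 := hKbound (n-1) h1
            have hcast : ((n - 1 : ℕ) : ℝ) = (n:ℝ) - 1 := by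
              have : 1 ≤ n := by omega
              push_cast [this]; ring
            rw [hcast] at h2
            calc b n * |F (n-1)| ≤ b n * (ε' * ((n:ℝ) - 1)) :=
                  mul_le_mul_of_nonneg_left h2 (hb n)
              _ = ε' * (b n * ((n:ℝ) - 1)) := by ring
        _ ≤ ∑ n ∈ Finset.Icc 1 N, ε' * (b n * ((n:ℝ) - 1)) := by
            refine Finset.sum_le_sum_of_subset_of_nonneg ?_ fun n hn _ => ?_
            · intro n hn
              obtain ⟨hn1, hn2⟩ := Finset.mem_Ioc.mp hn
              exact Finset.mem_Icc.mpr ⟨by omega, hn2⟩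
            · obtain ⟨hn1, hn2⟩ := Finset.mem_Icc.mp hn
              have h1n : (1:ℝ) ≤ n := by exact_mod_cast hn1
              exact mul_nonneg hε'.le (mul_nonneg (hb n) (by linarith))
        _ = ε' * ((N:ℝ) * a N - S N) := by
            rw [← Finset.mul_sum, sum_b_aux b a ha N]
    -- the Abel bound
    have habel := abel_aux f b a ha N
    have hTabs : |∑ k ∈ Finset.Icc 1 N, a k * f k|
        ≤ a N * |F N| + (D + ε' * ((N:ℝ) * a N - S N)) := by
      rw [habel]
      calc |a N * F N - ∑ n ∈ Finset.Icc 1 N, b n * F (n-1)|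
          ≤ |a N * F N| + |∑ n ∈ Finset.Icc 1 N, b n * F (n-1)| := abs_sub _ _
        _ ≤ a N * |F N| + ∑ n ∈ Finset.Icc 1 N, b n * |F (n-1)| := by
            gcongr
            · rw [abs_mul, abs_of_nonneg (ha0 N)]
            · refine (Finset.abs_sum_le_sum_abs _ _).trans ?_
              refine le_of_eq (Finset.sum_congr rfl fun n _ => ?_)
              rw [abs_mul, abs_of_nonneg (hb n)]
        _ ≤ a N * |F N| + (D + ε' * ((N:ℝ) * a N - S N)) := by linarith
    -- put it together
    have hSne : S N ≠ 0 := hS.ne'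
    have step1 : ‖(∑ k ∈ Finset.Icc 1 N, a k * f k) / S N‖
        = |∑ k ∈ Finset.Icc 1 N, a k * f k| / S N := by
      rw [Real.norm_eq_abs, abs_div, abs_of_pos hS]
    rw [step1]
    have key : |∑ k ∈ Finset.Icc 1 N, a k * f k| / S N
        ≤ (a N * |F N|) / S N + D / S N + (ε' * ((N:ℝ) * a N - S N)) / S N := by
      rw [← add_div, ← add_div]
      gcongr
      linarith
    have b1 : (a N * |F N|) / S N ≤ M * ε' := by
      have heq : (a N * |F N|) / S N = (((N:ℝ) * a N) / S N) * (|F N| / N) := by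
        field_simp
      rw [heq]
      have h1 : (0:ℝ) ≤ ((N:ℝ) * a N) / S N :=
        div_nonneg (mul_nonneg (Nat.cast_nonneg N) (ha0 N)) hS.le
      have h2 : (0:ℝ) ≤ |F N| / N := by positivity
      exact mul_le_mul hM hFN h2 (le_trans h1 hM)
    have b2 : (ε' * ((N:ℝ) * a N - S N)) / S N ≤ ε' * M := by
      have heq : (ε' * ((N:ℝ) * a N - S N)) / S N
          = ε' * (((N:ℝ) * a N) / S N - 1) := by
        field_simp
      rw [heq]
      nlinarith
    calc |∑ k ∈ Finset.Icc 1 N, a k * f k| / S N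
        ≤ (a N * |F N|) / S N + D / S N + (ε' * ((N:ℝ) * a N - S N)) / S N := key
      _ ≤ M * ε' + ε' + ε' * M := by linarith
      _ = ε' * (2*M + 1) := by ring
      _ < ε := hfinal
  -- conclude
  have hfin := hT.add (tendsto_const_nhds (x := C))
  rw [zero_add] at hfin
  refine hfin.congr' ?_
  filter_upwards [hSpos] with N hS
  have hsum : ∑ k ∈ Finset.Icc 1 N, a k * g k
      = (∑ k ∈ Finset.Icc 1 N, a k * f k) + C * S N := by
    rw [hSdef]
    simp only [hfdef]
    rw [Finset.mul_sum, ← Finset.sum_add_distrib]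
    refine Finset.sum_congr rfl fun k _ => ?_
    ring
  rw [hsum, add_div, mul_div_assoc, div_self hS.ne', mul_one]
end

section
/- If x is irrational, then the weighted averages (∑_{k=1}^{N} k²·sin²(kπx)) / (∑_{k=1}^{N} k²) converge to 1/2 as N → ∞. -/
/-!
Since `sin² t = 1/2 - cos (2t) / 2`, it suffices that `∑_{k ≤ N} k² cos (2πkx) = o(∑_{k ≤ N} k²)`.
For irrational `x` the point `e^{2πix}` of the unit circle is not `1`, so the partial sums of
`cos (2πkx)` are bounded (they are real parts of a geometric series). Summation by parts against
the increasing weights `k²` then bounds the weighted sum by `O(N²)`, while `∑_{k ≤ N} k² ≥ N³/3`.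
-/

open Real Filter Finset

theorem norm_geom_sum_le_of_norm_le_one {K : Type*} [NormedField K] {z : K} (hz : ‖z‖ ≤ 1)
    (hz₁ : z ≠ 1) (n : ℕ) : ‖∑ i ∈ range n, z ^ i‖ ≤ 2 / ‖z - 1‖ := by
  rw [geom_sum_eq hz₁, norm_div]
  gcongr
  calc ‖z ^ n - 1‖ ≤ ‖z ^ n‖ + ‖(1 : K)‖ := norm_sub_le _ _
    _ ≤ 1 + 1 := by rw [norm_pow, norm_one]; gcongr; exact pow_le_one₀ (norm_nonneg z) hz
    _ = 2 := one_add_one_eq_two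

theorem exists_abs_sum_range_cos_mul_le {θ : ℝ} (hθ : ∀ m : ℤ, θ ≠ m * (2 * π)) :
    ∃ C, ∀ n : ℕ, |∑ k ∈ range n, cos (k * θ)| ≤ C := by
  set z : ℂ := (Circle.exp θ : ℂ) with hz
  have hz₁ : z ≠ 1 := by
    rw [hz, Ne, Circle.coe_eq_one, Circle.exp_eq_one]
    exact fun ⟨m, hm⟩ => hθ m hm
  refine ⟨2 / ‖z - 1‖, fun n => ?_⟩
  have hcos : ∀ k : ℕ, cos (k * θ) = (z ^ k).re := fun k => by
    rw [hz, ← Circle.coe_pow, ← Circle.exp_nsmul, Circle.coe_exp, Complex.exp_ofReal_mul_I_re,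
      nsmul_eq_mul]
  simp_rw [hcos, ← Complex.re_sum]
  exact (Complex.abs_re_le_norm _).trans
    (norm_geom_sum_le_of_norm_le_one (Circle.norm_coe _).le hz₁ n)

theorem abs_sum_range_succ_mul_le_of_monotone {w c : ℕ → ℝ} {C : ℝ} (hw : Monotone w)
    (hw₀ : 0 ≤ w 0) (hc : ∀ n, |∑ k ∈ range n, c k| ≤ C) (N : ℕ) :
    |∑ k ∈ range (N + 1), w k * c k| ≤ 2 * C * w N := by
  have hwN : 0 ≤ w N := hw₀.trans (hw N.zero_le)
  have hparts := sum_range_by_parts w c (N + 1)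
  simp only [smul_eq_mul, add_tsub_cancel_right] at hparts
  rw [hparts]
  calc _ ≤ |w N * ∑ k ∈ range (N + 1), c k|
        + |∑ i ∈ range N, (w (i + 1) - w i) * ∑ k ∈ range (i + 1), c k| := abs_sub _ _
    _ ≤ w N * C + ∑ i ∈ range N, (w (i + 1) - w i) * C := by
        gcongr
        · rw [abs_mul, abs_of_nonneg hwN]; gcongr; exact hc _
        · refine (abs_sum_le_sum_abs _ _).trans (sum_le_sum fun i _ => ?_)
          rw [abs_mul, abs_of_nonneg (sub_nonneg.2 (hw i.le_succ))]
          gcongr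
          exacts [sub_nonneg.2 (hw i.le_succ), hc _]
    _ = 2 * C * w N - C * w 0 := by rw [← sum_mul, sum_range_sub]; ring
    _ ≤ 2 * C * w N := sub_le_self _ (mul_nonneg ((abs_nonneg _).trans (hc 0)) hw₀)

theorem cube_le_three_mul_sum_range_succ_sq (N : ℕ) :
    (N : ℝ) ^ 3 ≤ 3 * ∑ k ∈ range (N + 1), (k : ℝ) ^ 2 := by
  induction N with
  | zero => simp
  | succ n ih =>
    rw [sum_range_succ]
    push_cast
    nlinarith [n.cast_nonneg (α := ℝ)]

theorem sum_Icc_one_eq_sum_range_succ {M : Type*} [AddCommMonoid M] {f : ℕ → M} (hf : f 0 = 0)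
    (N : ℕ) : ∑ k ∈ Icc 1 N, f k = ∑ k ∈ range (N + 1), f k := by
  rw [Nat.range_succ_eq_Icc_zero, ← insert_Icc_add_one_left_eq_Icc N.zero_le,
    sum_insert (by simp), hf, zero_add, zero_add]

theorem tendsto_div_of_abs_le_sq_of_cube_le {T Q : ℕ → ℝ} {C c : ℝ} (hc : 0 < c)
    (hT : ∀ N : ℕ, |T N| ≤ C * N ^ 2) (hQ : ∀ N : ℕ, (N : ℝ) ^ 3 ≤ c * Q N) :
    Tendsto (fun N => T N / Q N) atTop (nhds 0) := by
  refine squeeze_zero_norm' ?_ (tendsto_const_div_atTop_nhds_zero_nat (c * C))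
  filter_upwards [eventually_ge_atTop 1] with N hN
  have hN : (0 : ℝ) < N := by exact_mod_cast hN
  have hQpos : 0 < Q N := pos_of_mul_pos_right ((pow_pos hN 3).trans_le (hQ N)) hc.le
  calc ‖T N / Q N‖ = c * |T N| / (c * Q N) := by
        rw [Real.norm_eq_abs, abs_div, abs_of_pos hQpos, mul_div_mul_left _ _ hc.ne']
    _ ≤ c * |T N| / N ^ 3 := by gcongr; exact hQ N
    _ ≤ c * (C * N ^ 2) / N ^ 3 := by gcongr; exact hT N
    _ = c * C / N := by field_simp

/-- For irrational `x`, the weighted averages of `sin²(kπx)` with weights `k²`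
converge to `1/2`. -/
theorem weighted_sin_sq_irrational (x : ℝ) (hx : Irrational x) :
    Tendsto (fun N : ℕ =>
        (∑ k ∈ Finset.Icc 1 N, (k : ℝ) ^ 2 * Real.sin ((k : ℝ) * Real.pi * x) ^ 2)
          / ∑ k ∈ Finset.Icc 1 N, (k : ℝ) ^ 2)
      atTop (nhds (1 / 2)) := by
  obtain ⟨C, hC⟩ := exists_abs_sum_range_cos_mul_le (θ := 2 * π * x) fun m hm =>
    hx.ne_int m (mul_left_cancel₀ two_pi_pos.ne' (hm.trans (mul_comm _ _)))
  set T : ℕ → ℝ := fun N => ∑ k ∈ range (N + 1), (k : ℝ) ^ 2 * cos (k * (2 * π * x))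
  set Q : ℕ → ℝ := fun N => ∑ k ∈ range (N + 1), (k : ℝ) ^ 2
  have hT : ∀ N : ℕ, |T N| ≤ 2 * C * N ^ 2 :=
    abs_sum_range_succ_mul_le_of_monotone (fun a b hab => by gcongr) (by simp) hC
  have hTQ : Tendsto (fun N => T N / Q N) atTop (nhds 0) :=
    tendsto_div_of_abs_le_sq_of_cube_le three_pos hT cube_le_three_mul_sum_range_succ_sq
  have hQ : ∀ N : ℕ, ∑ k ∈ Icc 1 N, (k : ℝ) ^ 2 = Q N := sum_Icc_one_eq_sum_range_succ (by simp)
  have hS : ∀ N : ℕ, ∑ k ∈ Icc 1 N, (k : ℝ) ^ 2 * sin (k * π * x) ^ 2 = Q N / 2 - T N / 2 := by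
    intro N
    rw [sum_Icc_one_eq_sum_range_succ (by simp)]
    simp only [Q, T, sum_div, ← sum_sub_distrib]
    refine sum_congr rfl fun k _ => ?_
    rw [sin_sq_eq_half_sub]
    ring_nf
  have hlim := (tendsto_const_nhds (x := (1 / 2 : ℝ))).sub (hTQ.div_const 2)
  rw [zero_div, sub_zero] at hlim
  refine hlim.congr' ?_
  filter_upwards [eventually_gt_atTop 0] with N hN
  have hQpos : 0 < Q N := sum_pos' (fun k _ => by positivity)
    ⟨N, self_mem_range_succ N, pow_pos (Nat.cast_pos.2 hN) 2⟩
  rw [hS, hQ]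
  field_simp
end

section
/- If x and t are irrational, then ε·S₂/S₁ → 0 as ε → 0, where S₁ = ∑_{(m,n)∈R_ε} cos²(mπx)cos²(nπt) and S₂ = ∑_{(m,n)∈R_ε} mπ cos(mπx) sin(mπx) cos²(nπt), with R_ε the quarter-ring {(k,l)∈ℕ² : α₋ < ε√(k²+l²) < α₊} for fixed 0 < α₋ < α₊. -/
open Real Filter

/-- The quarter ring of strongly unstable modes (scaled by `ε`):
`{(k,l) ∈ ℕ² : α₋ < ε·√(k²+l²) < α₊}`. -/
def ringSet (am ap ε : ℝ) : Set (ℕ × ℕ) :=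
  {p | am < ε * Real.sqrt ((p.1 : ℝ) ^ 2 + (p.2 : ℝ) ^ 2) ∧
       ε * Real.sqrt ((p.1 : ℝ) ^ 2 + (p.2 : ℝ) ^ 2) < ap}

/-- `S₁ = ∑_{(m,n)∈R_ε} cos²(mπx) cos²(nπt)`. -/
noncomputable def S1 (am ap ε x t : ℝ) : ℝ :=
  ∑' p : ℕ × ℕ,
    Set.indicator (ringSet am ap ε)
      (fun p => Real.cos ((p.1 : ℝ) * Real.pi * x) ^ 2 *
                Real.cos ((p.2 : ℝ) * Real.pi * t) ^ 2) p

/-- `S₂ = ∑_{(m,n)∈R_ε} mπ cos(mπx) sin(mπx) cos²(nπt)`. -/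
noncomputable def S2 (am ap ε x t : ℝ) : ℝ :=
  ∑' p : ℕ × ℕ,
    Set.indicator (ringSet am ap ε)
      (fun p => (p.1 : ℝ) * Real.pi *
                Real.cos ((p.1 : ℝ) * Real.pi * x) *
                Real.sin ((p.1 : ℝ) * Real.pi * x) *
                Real.cos ((p.2 : ℝ) * Real.pi * t) ^ 2) p

/-!
Each row `{m | (m, n) ∈ R_ε}` of the quarter ring is an interval of `ℕ` contained in `[0, N)`,
`N = ⌊α₊/ε⌋ + 1`, and there are at most `N` rows (and, by symmetry, columns). For irrational `y`
the sums of `cos (2π m y)` and `sin (2π m y)` over an interval are bounded, being real and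
imaginary parts of geometric sums of `e^{2πiy} ≠ 1`; by Abel summation the sums of
`m sin (2π m y)` over `[a, b)` are `O(b)`. Expanding `cos²` and `cos · sin` by the double-angle
formulas therefore gives `4 S₁ ≥ #R_ε - O(N)` and `S₂ = O(N²)`. Since `R_ε` contains a box with
sides `⌊(α₊ - α₋)/(2ε)⌋`, `#R_ε ≳ ε⁻²`, while `N ≲ ε⁻¹`; hence `ε S₂ / S₁ = O(ε)`.
-/

open Finset Topology

lemma Finset.eq_Icc_min'_max'_of_ordConnected {α : Type*} [LinearOrder α] [LocallyFiniteOrder α]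
    {s : Finset α} (hs : (s : Set α).OrdConnected) (hne : s.Nonempty) :
    s = Icc (s.min' hne) (s.max' hne) := by
  ext x
  rw [mem_Icc]
  exact ⟨fun hx => ⟨s.min'_le x hx, s.le_max' x hx⟩,
    fun hx => hs.out (s.min'_mem hne) (s.max'_mem hne) hx⟩

lemma norm_geom_sum_Ico_le {𝕜 : Type*} [NormedDivisionRing 𝕜] {z : 𝕜} (hz : ‖z‖ ≤ 1)
    (h1 : z ≠ 1) (a b : ℕ) : ‖∑ m ∈ Ico a b, z ^ m‖ ≤ 2 / ‖z - 1‖ := by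
  rcases le_or_gt a b with hab | hab
  · rw [geom_sum_Ico h1 hab, norm_div]
    gcongr
    calc ‖z ^ b - z ^ a‖ ≤ ‖z‖ ^ b + ‖z‖ ^ a := by
          simpa only [norm_pow] using norm_sub_le (z ^ b) (z ^ a)
      _ ≤ 2 := by
          have := pow_le_one₀ (norm_nonneg z) hz (n := b)
          have := pow_le_one₀ (norm_nonneg z) hz (n := a)
          linarith
  · rw [Ico_eq_empty_of_le hab.le, sum_empty, norm_zero]
    positivity

lemma exists_abs_sum_Ico_cos_sin_le {θ : ℝ} (hθ : Complex.exp (θ * Complex.I) ≠ 1) :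
    ∃ C, ∀ a b : ℕ, |∑ m ∈ Ico a b, cos (m * θ)| ≤ C ∧ |∑ m ∈ Ico a b, sin (m * θ)| ≤ C := by
  have hpow (m : ℕ) :
      Complex.exp (θ * Complex.I) ^ m = Complex.exp ((m * θ : ℝ) * Complex.I) := by
    rw [← Complex.exp_nat_mul]; push_cast; ring_nf
  refine ⟨2 / ‖Complex.exp (θ * Complex.I) - 1‖, fun a b => ?_⟩
  have hsum := norm_geom_sum_Ico_le (Complex.norm_exp_ofReal_mul_I θ).le hθ a b
  simp only [hpow] at hsum
  constructor
  · refine le_trans (le_of_eq ?_) ((Complex.abs_re_le_norm _).trans hsum)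
    simp only [Complex.re_sum, Complex.exp_ofReal_mul_I_re]
  · refine le_trans (le_of_eq ?_) ((Complex.abs_im_le_norm _).trans hsum)
    simp only [Complex.im_sum, Complex.exp_ofReal_mul_I_im]

lemma Irrational.cexp_two_pi_mul_I_ne_one {y : ℝ} (hy : Irrational y) :
    Complex.exp ((2 * π * y : ℝ) * Complex.I) ≠ 1 := by
  rw [Ne, Complex.exp_eq_one_iff]
  rintro ⟨n, hn⟩
  have him : 2 * π * y = 2 * π * n := by simpa [mul_comm] using congrArg Complex.im hn
  exact hy.ne_int n (mul_left_cancel₀ (by positivity) him)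

lemma abs_sum_Ico_natCast_mul_le {g : ℕ → ℝ} {C : ℝ}
    (hg : ∀ a b, |∑ m ∈ Ico a b, g m| ≤ C) (a b : ℕ) :
    |∑ m ∈ Ico a b, (m : ℝ) * g m| ≤ 2 * b * C := by
  have hC : 0 ≤ C := by simpa using hg 0 0
  rcases le_or_gt b a with hab | hab
  · rw [Ico_eq_empty_of_le hab, sum_empty, abs_zero]
    positivity
  have hG (k : ℕ) : |∑ m ∈ range k, g m| ≤ C := by simpa using hg 0 k
  have hparts := sum_Ico_by_parts (fun m : ℕ => (m : ℝ)) g hab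
  simp only [smul_eq_mul, Nat.cast_add, Nat.cast_one, add_sub_cancel_left, one_mul] at hparts
  have hlast : |∑ i ∈ Ico a (b - 1), ∑ m ∈ range (i + 1), g m| ≤ (b - 1 - a : ℕ) * C :=
    calc _ ≤ ∑ i ∈ Ico a (b - 1), |∑ m ∈ range (i + 1), g m| := abs_sum_le_sum_abs _ _
      _ ≤ ∑ i ∈ Ico a (b - 1), C := sum_le_sum fun i _ => hG _
      _ = (b - 1 - a : ℕ) * C := by simp
  have hfirst := mul_le_mul_of_nonneg_left (hG b) (Nat.cast_nonneg (α := ℝ) (b - 1))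
  have hsecond := mul_le_mul_of_nonneg_left (hG a) (Nat.cast_nonneg (α := ℝ) a)
  have hcount : ((b - 1 : ℕ) + a + (b - 1 - a : ℕ) : ℝ) ≤ 2 * b := by
    exact_mod_cast (by omega : b - 1 + a + (b - 1 - a) ≤ 2 * b)
  rw [hparts]
  calc _ ≤ |((b - 1 : ℕ) : ℝ) * ∑ m ∈ range b, g m| + |(a : ℝ) * ∑ m ∈ range a, g m|
        + |∑ i ∈ Ico a (b - 1), ∑ m ∈ range (i + 1), g m| :=
        (abs_sub _ _).trans (add_le_add (abs_sub _ _) le_rfl)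
    _ ≤ ((b - 1 : ℕ) + a + (b - 1 - a : ℕ) : ℝ) * C := by
        rw [abs_mul, abs_mul, Nat.abs_cast, Nat.abs_cast]
        linarith
    _ ≤ 2 * b * C := by gcongr

section QuarterRing

variable {am ap ε : ℝ}

noncomputable def ringBound (ap ε : ℝ) : ℕ := ⌊ap / ε⌋₊ + 1

open scoped Classical in
noncomputable def ringFinset (am ap ε : ℝ) : Finset (ℕ × ℕ) :=
  {p ∈ range (ringBound ap ε) ×ˢ range (ringBound ap ε) | p ∈ ringSet am ap ε}

lemma lt_ringBound_of_mem_ringSet (hε : 0 < ε) {p : ℕ × ℕ} (hp : p ∈ ringSet am ap ε) :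
    p.1 < ringBound ap ε ∧ p.2 < ringBound ap ε := by
  have hr : √((p.1 : ℝ) ^ 2 + (p.2 : ℝ) ^ 2) ≤ ap / ε := by
    rw [le_div_iff₀' hε]; exact hp.2.le
  have hle {k : ℕ} (hk : (k : ℝ) ^ 2 ≤ (p.1 : ℝ) ^ 2 + (p.2 : ℝ) ^ 2) : k < ringBound ap ε :=
    Nat.lt_add_one_iff.2 <| Nat.le_floor <| (Real.le_sqrt_of_sq_le hk).trans hr
  exact ⟨hle (le_add_of_nonneg_right (by positivity)), hle (le_add_of_nonneg_left (by positivity))⟩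

lemma mem_ringFinset (hε : 0 < ε) {p : ℕ × ℕ} :
    p ∈ ringFinset am ap ε ↔ p ∈ ringSet am ap ε := by
  classical
  simp only [ringFinset, mem_filter, mem_product, mem_range, and_iff_right_iff_imp]
  exact lt_ringBound_of_mem_ringSet hε

lemma tsum_indicator_ringSet (hε : 0 < ε) (f : ℕ × ℕ → ℝ) :
    ∑' p, (ringSet am ap ε).indicator f p = ∑ p ∈ ringFinset am ap ε, f p := by
  rw [tsum_eq_sum fun p hp =>
    Set.indicator_of_notMem (fun h => hp ((mem_ringFinset hε).2 h)) f]
  exact sum_congr rfl fun p hp => Set.indicator_of_mem ((mem_ringFinset hε).1 hp) f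

lemma sum_ringFinset_swap (hε : 0 < ε) (f : ℕ × ℕ → ℝ) :
    ∑ p ∈ ringFinset am ap ε, f p.swap = ∑ p ∈ ringFinset am ap ε, f p := by
  refine sum_equiv (Equiv.prodComm ℕ ℕ) (fun p => ?_) fun _ _ => rfl
  simp only [mem_ringFinset hε, ringSet, Set.mem_ofPred_eq, Equiv.prodComm_apply, Prod.fst_swap,
    Prod.snd_swap, add_comm]

lemma ordConnected_ringSet_row (hε : 0 ≤ ε) (n : ℕ) :
    {m : ℕ | (m, n) ∈ ringSet am ap ε}.OrdConnected :=
  Set.ordConnected_Ioo.preimage_mono fun k l hkl => by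
    dsimp only
    gcongr

lemma abs_sum_ringFinset_le (hε : 0 < ε) (F : ℕ → ℕ → ℝ) {B : ℝ}
    (hF : ∀ n a b, b ≤ ringBound ap ε → |∑ m ∈ Ico a b, F m n| ≤ B) :
    |∑ p ∈ ringFinset am ap ε, F p.1 p.2| ≤ ringBound ap ε * B := by
  classical
  have hrow (n : ℕ) : |∑ m ∈ range (ringBound ap ε) with (m, n) ∈ ringSet am ap ε, F m n| ≤ B := by
    set row := {m ∈ range (ringBound ap ε) | (m, n) ∈ ringSet am ap ε}
    rcases row.eq_empty_or_nonempty with hrow | hne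
    · simpa [hrow] using hF n 0 0 (Nat.zero_le _)
    have hconn : (row : Set ℕ).OrdConnected := by
      convert (Set.ordConnected_Iio (a := ringBound ap ε)).inter
        (ordConnected_ringSet_row (am := am) (ap := ap) hε.le n)
      ext m
      simp [row]
    rw [row.eq_Icc_min'_max'_of_ordConnected hconn hne, ← Ico_add_one_right_eq_Icc]
    exact hF n _ _ (mem_range.1 (mem_filter.1 (row.max'_mem hne)).1)
  calc |∑ p ∈ ringFinset am ap ε, F p.1 p.2|
      = |∑ n ∈ range (ringBound ap ε), ∑ m ∈ range (ringBound ap ε) with (m, n) ∈ ringSet am ap ε,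
          F m n| := by
        rw [ringFinset, sum_filter, sum_product_right]
        simp only [sum_filter]
    _ ≤ ∑ n ∈ range (ringBound ap ε), B :=
        (abs_sum_le_sum_abs _ _).trans (sum_le_sum fun n _ => hrow n)
    _ = ringBound ap ε * B := by simp

lemma sq_le_card_ringFinset (hε : 0 < ε) (ham : 0 ≤ am) :
    ⌊(ap - am) / 2 / ε⌋₊ ^ 2 ≤ #(ringFinset am ap ε) := by
  set K := ⌊(ap - am) / 2 / ε⌋₊
  set m₀ := ⌊am / ε⌋₊ + 1
  calc K ^ 2 = #(Ico m₀ (m₀ + K) ×ˢ range K) := by simp [sq]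
    _ ≤ #(ringFinset am ap ε) := card_le_card fun p hp => ?_
  obtain ⟨⟨hm₀, hmK⟩, hn⟩ : (m₀ ≤ p.1 ∧ p.1 < m₀ + K) ∧ p.2 < K := by
    simpa only [mem_product, mem_Ico, mem_range] using hp
  have hnK : ((p.2 + 1 : ℕ) : ℝ) ≤ (ap - am) / 2 / ε := (Nat.le_floor_iff' (by omega)).1 hn
  have hK : (K : ℝ) ≤ (ap - am) / 2 / ε := Nat.floor_le (le_trans (by positivity) hnK)
  have hfloor : (⌊am / ε⌋₊ : ℝ) ≤ am / ε := Nat.floor_le (by positivity)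
  have hm_lo : am / ε < p.1 :=
    (Nat.lt_floor_add_one _).trans_le (by exact_mod_cast hm₀)
  have hm_hi : (p.1 : ℝ) ≤ ⌊am / ε⌋₊ + K := by exact_mod_cast (by omega : p.1 ≤ ⌊am / ε⌋₊ + K)
  rw [mem_ringFinset hε]
  constructor
  · calc am < ε * p.1 := (div_lt_iff₀' hε).1 hm_lo
      _ ≤ ε * √((p.1 : ℝ) ^ 2 + (p.2 : ℝ) ^ 2) := by
          gcongr; exact Real.le_sqrt_of_sq_le (by nlinarith)
  · calc ε * √((p.1 : ℝ) ^ 2 + (p.2 : ℝ) ^ 2) ≤ ε * (p.1 + p.2) := by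
          gcongr
          refine Real.sqrt_le_iff.2 ⟨by positivity, ?_⟩
          nlinarith [mul_nonneg (Nat.cast_nonneg (α := ℝ) p.1) (Nat.cast_nonneg (α := ℝ) p.2)]
      _ < ap := by
          push_cast at hnK
          rw [← lt_div_iff₀' hε]
          have : ap / ε = am / ε + 2 * ((ap - am) / 2 / ε) := by field_simp; ring
          linarith

lemma card_ringFinset_sub_le_four_mul_S1 (hε : 0 < ε) {x t Bx Bt : ℝ}
    (hx : ∀ a b : ℕ, |∑ m ∈ Ico a b, cos (m * (2 * π * x))| ≤ Bx)
    (ht : ∀ a b : ℕ, |∑ m ∈ Ico a b, cos (m * (2 * π * t))| ≤ Bt) :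
    #(ringFinset am ap ε) - ringBound ap ε * (Bt + 2 * Bx) ≤ 4 * S1 am ap ε x t := by
  have hcos_sq (m : ℕ) (y : ℝ) : cos (m * π * y) ^ 2 = (1 + cos (m * (2 * π * y))) / 2 := by
    rw [cos_sq]; ring_nf
  have hsplit : 4 * S1 am ap ε x t = #(ringFinset am ap ε)
      + ∑ p ∈ ringFinset am ap ε, cos (p.2 * (2 * π * t))
      + ∑ p ∈ ringFinset am ap ε, 2 * cos (p.2 * π * t) ^ 2 * cos (p.1 * (2 * π * x)) := by
    rw [S1, tsum_indicator_ringSet hε, mul_sum, card_eq_sum_ones, Nat.cast_sum,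
      ← sum_add_distrib, ← sum_add_distrib]
    refine sum_congr rfl fun p _ => ?_
    rw [hcos_sq, hcos_sq p.2]
    push_cast
    ring
  have hcol : |∑ p ∈ ringFinset am ap ε, cos (p.2 * (2 * π * t))| ≤ ringBound ap ε * Bt := by
    rw [← sum_ringFinset_swap hε]
    exact abs_sum_ringFinset_le hε (fun m _ => cos (m * (2 * π * t))) fun _ a b _ => ht a b
  have hrow : |∑ p ∈ ringFinset am ap ε, 2 * cos (p.2 * π * t) ^ 2 * cos (p.1 * (2 * π * x))|
      ≤ ringBound ap ε * (2 * Bx) := by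
    refine abs_sum_ringFinset_le hε (fun m n => 2 * cos (n * π * t) ^ 2 * cos (m * (2 * π * x)))
      fun n a b _ => ?_
    rw [← mul_sum, abs_mul, abs_of_nonneg (by positivity)]
    calc 2 * cos (n * π * t) ^ 2 * |∑ m ∈ Ico a b, cos (m * (2 * π * x))| ≤ 2 * 1 * Bx := by
          gcongr; exacts [cos_sq_le_one _, hx a b]
      _ = 2 * Bx := by ring
  linarith [abs_le.1 hcol, abs_le.1 hrow]

lemma abs_S2_le (hε : 0 < ε) {x t Bx : ℝ}
    (hx : ∀ a b : ℕ, |∑ m ∈ Ico a b, sin (m * (2 * π * x))| ≤ Bx) :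
    |S2 am ap ε x t| ≤ π * ringBound ap ε ^ 2 * Bx := by
  have hterm (m n : ℕ) : m * π * cos (m * π * x) * sin (m * π * x) * cos (n * π * t) ^ 2
      = π / 2 * cos (n * π * t) ^ 2 * (m * sin (m * (2 * π * x))) := by
    rw [show (m : ℝ) * (2 * π * x) = 2 * (m * π * x) by ring, sin_two_mul]
    ring
  rw [S2, tsum_indicator_ringSet hε]
  simp only [hterm]
  calc _ ≤ ringBound ap ε * (π * ringBound ap ε * Bx) := by
        refine abs_sum_ringFinset_le hε
          (fun m n => π / 2 * cos (n * π * t) ^ 2 * (m * sin (m * (2 * π * x)))) fun n a b hb => ?_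
        rw [← mul_sum, abs_mul, abs_of_nonneg (by positivity)]
        have hBx : 0 ≤ Bx := by simpa using hx 0 0
        calc π / 2 * cos (n * π * t) ^ 2 * |∑ m ∈ Ico a b, (m : ℝ) * sin (m * (2 * π * x))|
            ≤ π / 2 * 1 * (2 * b * Bx) := by
              gcongr; exacts [cos_sq_le_one _, abs_sum_Ico_natCast_mul_le hx a b]
          _ = π * b * Bx := by ring
          _ ≤ π * ringBound ap ε * Bx := by gcongr
    _ = π * ringBound ap ε ^ 2 * Bx := by ring

-- Numerator and denominator are scaled by `ε²`, so that both converge as `ε → 0⁺`.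
lemma abs_eps_mul_S2_div_S1_le {x t Bx Bt : ℝ} (hε : 0 < ε) (ham : 0 ≤ am)
    (hcos : ∀ a b : ℕ, |∑ m ∈ Ico a b, cos (m * (2 * π * x))| ≤ Bx)
    (hsin : ∀ a b : ℕ, |∑ m ∈ Ico a b, sin (m * (2 * π * x))| ≤ Bx)
    (ht : ∀ a b : ℕ, |∑ m ∈ Ico a b, cos (m * (2 * π * t))| ≤ Bt)
    (hpos : 0 < (ε * ⌊(ap - am) / 2 / ε⌋₊) ^ 2 - ε * (ε * ringBound ap ε) * (Bt + 2 * Bx)) :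
    |ε * S2 am ap ε x t / S1 am ap ε x t| ≤
      4 * π * Bx * ε * (ε * ringBound ap ε) ^ 2 /
        ((ε * ⌊(ap - am) / 2 / ε⌋₊) ^ 2 - ε * (ε * ringBound ap ε) * (Bt + 2 * Bx)) := by
  set N : ℝ := (ringBound ap ε : ℝ)
  set K : ℝ := (⌊(ap - am) / 2 / ε⌋₊ : ℝ)
  set D := K ^ 2 - N * (Bt + 2 * Bx)
  have hK : K ^ 2 ≤ #(ringFinset am ap ε) := by
    simp only [K]; exact_mod_cast sq_le_card_ringFinset (ap := ap) hε ham
  have hscale : (ε * K) ^ 2 - ε * (ε * N) * (Bt + 2 * Bx) = ε ^ 2 * D := by ring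
  rw [hscale] at hpos ⊢
  have hD : 0 < D := pos_of_mul_pos_right hpos (by positivity)
  have hS1 : D / 4 ≤ S1 am ap ε x t := by
    linarith [card_ringFinset_sub_le_four_mul_S1 (am := am) (ap := ap) hε hcos ht]
  have hS2 : |S2 am ap ε x t| ≤ π * N ^ 2 * Bx := abs_S2_le hε hsin
  have hS1pos : 0 < S1 am ap ε x t := by linarith
  rw [abs_div, abs_mul, abs_of_pos hε, abs_of_pos hS1pos]
  calc ε * |S2 am ap ε x t| / S1 am ap ε x t ≤ ε * (π * N ^ 2 * Bx) / (D / 4) := by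
        gcongr
        exact mul_nonneg hε.le ((abs_nonneg _).trans hS2)
    _ = _ := by field_simp

end QuarterRing

lemma tendsto_mul_natFloor_div_nhdsGT {R : Type*} [Field R] [LinearOrder R]
    [IsStrictOrderedRing R] [TopologicalSpace R] [OrderTopology R] [FloorRing R] {a : R}
    (ha : 0 ≤ a) :
    Tendsto (fun ε : R => ε * ⌊a / ε⌋₊) (𝓝[>] 0) (𝓝 a) := by
  refine ((tendsto_nat_floor_mul_div_atTop ha).comp tendsto_inv_nhdsGT_zero).congr fun ε => ?_
  simp [div_eq_mul_inv, mul_comm]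

lemma tendsto_mul_ringBound {a : ℝ} (ha : 0 ≤ a) :
    Tendsto (fun ε => ε * ringBound a ε) (𝓝[>] 0) (𝓝 a) := by
  have hε : Tendsto (fun ε : ℝ => ε) (𝓝[>] 0) (𝓝 0) := nhdsWithin_le_nhds
  simpa [ringBound, mul_add] using (tendsto_mul_natFloor_div_nhdsGT ha).add hε

/-- For irrational `x, t` and the quarter ring `R_ε` with fixed radii `0 < α₋ < α₊`,
one has `ε·S₂/S₁ → 0` as `ε → 0⁺`. -/
theorem eps_S2_div_S1_tendsto (am ap : ℝ) (h0 : 0 < am) (h1 : am < ap)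
    (x t : ℝ) (hx : Irrational x) (ht : Irrational t) :
    Tendsto (fun ε : ℝ => ε * S2 am ap ε x t / S1 am ap ε x t)
      (nhdsWithin 0 (Set.Ioi 0)) (nhds 0) := by
  obtain ⟨Bx, hBx⟩ := exists_abs_sum_Ico_cos_sin_le hx.cexp_two_pi_mul_I_ne_one
  obtain ⟨Bt, hBt⟩ := exists_abs_sum_Ico_cos_sin_le ht.cexp_two_pi_mul_I_ne_one
  have hid : Tendsto (fun ε : ℝ => ε) (𝓝[>] 0) (𝓝 0) := nhdsWithin_le_nhds
  have hN := tendsto_mul_ringBound (h0.trans h1).le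
  have hK := tendsto_mul_natFloor_div_nhdsGT (a := (ap - am) / 2) (by linarith)
  have hden : Tendsto
      (fun ε => (ε * ⌊(ap - am) / 2 / ε⌋₊) ^ 2 - ε * (ε * ringBound ap ε) * (Bt + 2 * Bx))
      (𝓝[>] 0) (𝓝 (((ap - am) / 2) ^ 2)) := by
    simpa using (hK.pow 2).sub ((hid.mul hN).mul_const _)
  have hs : 0 < ((ap - am) / 2) ^ 2 := pow_pos (by linarith) 2
  have hbound := ((hid.const_mul (4 * π * Bx)).mul (hN.pow 2)).div hden hs.ne'
  rw [mul_zero, zero_mul, zero_div] at hbound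
  refine squeeze_zero_norm' ?_ hbound
  filter_upwards [self_mem_nhdsWithin, hden.eventually (lt_mem_nhds hs)] with ε hε hpos
  exact abs_eps_mul_S2_div_S1_le hε h0.le (fun a b => (hBx a b).1) (fun a b => (hBx a b).2)
    (fun a b => (hBt a b).1) hpos
end
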